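/- Let 0 < ν₁ ≤ ν₂ with ν₁ + ν₂ = 1, and suppose sequences (x_j), (y_j), (ν_j), (ε_j) satisfy ν₁ ≤ ν_j ≤ ν₂, ε_j → 0, 0 ≤ y_j ≤ ν₂, and x_j = -f_{ν_j}(y_j) + ε_j where f_ν(y) = (1+ν)y/(3y+(2-ν)). If limsup x_j = A and liminf y_j = B, then A ≤ -f_{ν₁}(B), i.e. (2-ν₁)A + (1+ν₁)B ≤ -3AB. -/
import Mathlib


open Filter

theorem jarnik_left_inequality_sequences
    (ν₁ ν₂ A B : ℝ) (x y ν ε : ℕ → ℝ)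
    (hν₁ : 0 < ν₁) (h12 : ν₁ ≤ ν₂) (hsum : ν₁ + ν₂ = 1)
    (hν : ∀ j, ν₁ ≤ ν j ∧ ν j ≤ ν₂)
    (hε : Tendsto ε atTop (nhds 0))
    (hy : ∀ j, 0 ≤ y j ∧ y j ≤ ν₂)
    (heq : ∀ j, x j = -((1 + ν j) * y j / (3 * y j + (2 - ν j))) + ε j)
    (hA : limsup x atTop = A) (hB : liminf y atTop = B) :
    A ≤ -((1 + ν₁) * B / (3 * B + (2 - ν₁))) ∧
      (2 - ν₁) * A + (1 + ν₁) * B ≤ -3 * A * B := by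
  have hν₂1 : ν₂ ≤ 1 := by linarith
  have hν₂0 : 0 < ν₂ := lt_of_lt_of_le hν₁ h12
  have hc : 0 < 2 - ν₁ := by linarith
  obtain ⟨g, hg⟩ : ∃ g : ℝ → ℝ,
      g = fun t => -((1 + ν₁) * max t 0 / (3 * max t 0 + (2 - ν₁))) := ⟨_, rfl⟩
  have hden : ∀ t : ℝ, 0 < 3 * max t 0 + (2 - ν₁) := by
    intro t; have := le_max_right t 0; nlinarith
  have hganti : Antitone g := by
    intro s t hst
    have hs : (0:ℝ) ≤ max s 0 := le_max_right s 0
    have hst' : max s 0 ≤ max t 0 := max_le_max hst le_rfl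
    simp only [hg]
    apply neg_le_neg
    rw [div_le_div_iff₀ (hden s) (hden t)]
    nlinarith [mul_le_mul_of_nonneg_left hst'
      (show (0:ℝ) ≤ (1 + ν₁) * (2 - ν₁) by nlinarith)]
  have hgcont : Continuous g := by
    rw [hg]
    apply Continuous.neg
    exact (continuous_const.mul (continuous_id.max continuous_const)).div
      ((continuous_const.mul (continuous_id.max continuous_const)).add continuous_const)
      (fun t => (hden t).ne')
  have hdenj : ∀ j, 0 < 3 * y j + (2 - ν j) := by
    intro j
    have := (hy j).1
    have := (hν j).2
    nlinarith
  have hFub : ∀ j, (1 + ν j) * y j / (3 * y j + (2 - ν j)) ≤ 2 := by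
    intro j
    rw [div_le_iff₀ (hdenj j)]
    have h1 := (hy j).1
    have h2 := (hy j).2
    have h3 := (hν j).1
    have h4 := (hν j).2
    nlinarith
  have hpt : ∀ j, x j ≤ g (y j) + ε j := by
    intro j
    rw [heq j]
    have hymax : max (y j) 0 = y j := max_eq_left (hy j).1
    have key : (1 + ν₁) * y j / (3 * y j + (2 - ν₁)) ≤
        (1 + ν j) * y j / (3 * y j + (2 - ν j)) := by
      rw [div_le_div_iff₀ (by rw [← hymax]; exact hden (y j)) (hdenj j)]
      have h1 := (hy j).1
      have h3 := (hν j).1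
      nlinarith [mul_nonneg (mul_nonneg h1 (sub_nonneg.2 h3))
        (show (0:ℝ) ≤ 3 * y j + 3 by linarith)]
    simp only [hg, hymax]
    linarith
  have hB0 : 0 ≤ B := by
    rw [← hB]
    exact le_liminf_of_le (isCoboundedUnder_ge_of_le atTop fun j => (hy j).2)
      (Eventually.of_forall fun j => (hy j).1)
  have hxcobdd : IsCoboundedUnder (· ≤ ·) atTop x := by
    apply isCoboundedUnder_le_of_eventually_le atTop (x := (-3 : ℝ))
    filter_upwards [hε.eventually (eventually_gt_nhds (by norm_num : (-1:ℝ) < 0))] with j hεj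
    rw [heq j]
    have := hFub j
    linarith
  have hAg : A ≤ g B := by
    apply le_of_forall_pos_le_add
    intro η hη
    rw [← hA]
    apply limsup_le_of_le hxcobdd
    have hcontB : ∀ᶠ t in nhds B, g t < g B + η / 2 :=
      (hgcont.tendsto B).eventually (eventually_lt_nhds (by linarith))
    obtain ⟨δ, hδ, hδball⟩ := Metric.eventually_nhds_iff.mp hcontB
    have hylt : ∀ᶠ j in atTop, B - δ < y j :=
      eventually_lt_of_lt_liminf (by rw [hB]; linarith)
        (isBoundedUnder_of ⟨0, fun j => (hy j).1⟩)
    filter_upwards [hylt, hε.eventually (eventually_lt_nhds (by linarith : (0:ℝ) < η / 2))]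
      with j hyj hεj
    have hgy : g (y j) ≤ g B + η / 2 := by
      rcases le_or_gt B (y j) with h | h
      · have h2 := hganti h
        linarith
      · have hd : dist (y j) B < δ := by
          rw [Real.dist_eq, abs_of_nonpos (by linarith)]
          linarith
        exact (hδball hd).le
    calc x j ≤ g (y j) + ε j := hpt j
      _ ≤ g B + η := by linarith
  have hgB : g B = -((1 + ν₁) * B / (3 * B + (2 - ν₁))) := by
    simp only [hg, max_eq_left hB0]
  rw [hgB] at hAg
  refine ⟨hAg, ?_⟩
  have hd : 0 < 3 * B + (2 - ν₁) := by nlinarith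
  have hmul := mul_le_mul_of_nonneg_right hAg hd.le
  rw [neg_mul, div_mul_cancel₀ _ hd.ne'] at hmul
  nlinarith [hmul]
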